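/- Let A be an n×m genotype matrix such that for every pair of columns i, j we have {01,10,11} ⊄ ind^A(i,j) and no resolution graph G_i contains a cycle of odd total weight. Then there exists a 2n×m haplotype matrix B explaining A that satisfies the three gamete property; moreover, B can be chosen so that for each row g ∈ A_i and each column j with g[j] = 2, the first explaining haplotype h of g has h[j] = 0 if column j is connected to column i by an even-weight path in a fixed connected supergraph G_i' of G_i (obtained by joining one vertex of each connected component of G_i not containing i to i by an edge of weight 0) and h[j] = 1 otherwise. -/

import Mathlib

/-- A pair of haplotypes `h`, `h'` explains a genotype `g`:
entries `0`/`1` are copied, and at `2`-entries the haplotypes differ. -/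
def ExplainsRow {m : ℕ} (h h' : Fin m → Bool) (g : Fin m → Fin 3) : Prop :=
  ∀ j : Fin m,
    (g j = 0 → h j = false ∧ h' j = false) ∧
    (g j = 1 → h j = true ∧ h' j = true) ∧
    (g j = 2 → h j ≠ h' j)

/-- A `2n × m` haplotype matrix, given by its odd rows `B₁` and even rows `B₂`,
explains an `n × m` genotype matrix `A`. -/
def Explains {n m : ℕ} (B₁ B₂ : Fin n → Fin m → Bool) (A : Fin n → Fin m → Fin 3) : Prop :=
  ∀ r : Fin n, ExplainsRow (B₁ r) (B₂ r) (A r)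

/-- The induced set `ind^B(i,j)` of a haplotype matrix: all pairs `xy` appearing
in columns `i` and `j` in some row of `B`. -/
def indB {n m : ℕ} (B₁ B₂ : Fin n → Fin m → Bool) (i j : Fin m) : Set (Bool × Bool) :=
  {p | ∃ r : Fin n, (B₁ r i = p.1 ∧ B₁ r j = p.2) ∨ (B₂ r i = p.1 ∧ B₂ r j = p.2)}

/-- The three gamete property: `{01,10,11}` is never a subset of an induced set. -/
def ThreeGamete {n m : ℕ} (B₁ B₂ : Fin n → Fin m → Bool) : Prop :=
  ∀ i j : Fin m,
    ¬ (({(false, true), (true, false), (true, true)} : Set (Bool × Bool)) ⊆ indB B₁ B₂ i j)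

/-- The four gamete property: no induced set equals `{00,01,10,11}`. -/
def FourGamete {n m : ℕ} (B₁ B₂ : Fin n → Fin m → Bool) : Prop :=
  ∀ i j : Fin m,
    indB B₁ B₂ i j ≠
      ({(false, false), (false, true), (true, false), (true, true)} : Set (Bool × Bool))

/-- A genotype matrix admits a directed perfect phylogeny if some explaining
haplotype matrix satisfies the three gamete property. -/
def AdmitsDirectedPP {n m : ℕ} (A : Fin n → Fin m → Fin 3) : Prop :=
  ∃ B₁ B₂ : Fin n → Fin m → Bool, Explains B₁ B₂ A ∧ ThreeGamete B₁ B₂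

/-- A genotype matrix admits a perfect phylogeny if some explaining
haplotype matrix satisfies the four gamete property. -/
def AdmitsPP {n m : ℕ} (A : Fin n → Fin m → Fin 3) : Prop :=
  ∃ B₁ B₂ : Fin n → Fin m → Bool, Explains B₁ B₂ A ∧ FourGamete B₁ B₂

/-- Encode a haplotype entry as a genotype entry. -/
def boolToFin3 (b : Bool) : Fin 3 := if b then 1 else 0

/-- The induced set `ind^A(i,j)` of a genotype matrix. -/
def indA {n m : ℕ} (A : Fin n → Fin m → Fin 3) (i j : Fin m) : Set (Bool × Bool) :=
  {p | ∃ r : Fin n,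
    (A r i = boolToFin3 p.1 ∧ A r j = boolToFin3 p.2) ∨
    (A r i = boolToFin3 p.1 ∧ A r j = 2) ∨
    (A r i = 2 ∧ A r j = boolToFin3 p.2)}

/-- Column `i` of `A` is greater than column `j` (written `i ≻^A j`):
`ind^A(i,j) ⊆ {00,10,11}` and the two columns are not identical. -/
def ColGreater {n m : ℕ} (A : Fin n → Fin m → Fin 3) (i j : Fin m) : Prop :=
  indA A i j ⊆ ({(false, false), (true, false), (true, true)} : Set (Bool × Bool)) ∧
  ∃ r : Fin n, A r i ≠ A r j

/-- The set `A_i`: rows `g` of `A` with `g[i] = 2` such that `i` is `≻^A`-maximal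
among the `2`-columns of `g` and has the least index among all such maximal columns. -/
def rowSet {n m : ℕ} (A : Fin n → Fin m → Fin 3) (i : Fin m) : Set (Fin n) :=
  {r | A r i = 2 ∧
    (∀ j : Fin m, j ≠ i → A r j = 2 → ¬ ColGreater A j i) ∧
    (∀ j : Fin m, j ≠ i →
      (A r j = 2 ∧ ∀ k : Fin m, k ≠ j → A r k = 2 → ¬ ColGreater A k j) → i < j)}

/-- `k` is a vertex of the resolution graph `G_i`. -/
def resVert {n m : ℕ} (A : Fin n → Fin m → Fin 3) (i k : Fin m) : Prop :=
  ∃ r ∈ rowSet A i, A r k = 2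

/-- The weighted edges of the resolution graph `G_i`: an edge `{k,l}` of weight `0`
or weight `1`, as prescribed by the construction of resolution graphs. -/
def resEdge {n m : ℕ} (A : Fin n → Fin m → Fin 3) (i : Fin m) (k l : Fin m) (w : ℕ) : Prop :=
  k ≠ l ∧ (∃ r ∈ rowSet A i, A r k = 2 ∧ A r l = 2) ∧
  ((w = 0 ∧
      (((true, true) : Bool × Bool) ∈ indA A k l ∨
        ∃ j : Fin m, j ≠ i ∧ ∃ r₂ ∈ rowSet A j, A r₂ k = 2 ∧ A r₂ l = 2)) ∨
   (w = 1 ∧ ({(false, true), (true, false)} : Set (Bool × Bool)) ⊆ indA A k l))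

/-- An edge-weighted graph, given as a relation `E u v w` ("there is an edge between
`u` and `v` of weight `w`"), contains a cycle of odd total weight: a closed sequence of
pairwise distinct vertices joined by pairwise distinct weighted edges whose weights
sum to an odd number. -/
def HasOddWeightCycle {V : Type*} (E : V → V → ℕ → Prop) : Prop :=
  ∃ (p : ℕ) (c : Fin (p + 1) → V) (w : Fin (p + 1) → ℕ),
    Function.Injective c ∧
    (∀ t : Fin (p + 1), E (c t) (c (t + 1)) (w t)) ∧
    Function.Injective (fun t : Fin (p + 1) => (Sym2.mk (c t, c (t + 1)), w t)) ∧
    Odd (∑ t, w t)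

/-- A path from `u` to `v` in an edge-weighted graph `E`: a sequence of `p + 1`
pairwise distinct vertices starting at `u` and ending at `v`, consecutive ones joined
by edges carrying the weights `w`. -/
def IsPath {V : Type*} (E : V → V → ℕ → Prop) (u v : V) (p : ℕ)
    (c : Fin (p + 1) → V) (w : Fin p → ℕ) : Prop :=
  Function.Injective c ∧ c 0 = u ∧ c (Fin.last p) = v ∧
    ∀ t : Fin p, E (c t.castSucc) (c t.succ) (w t)

/-- There is a path from `u` to `v` in the edge-weighted graph `E`. -/
def ReachableW {V : Type*} (E : V → V → ℕ → Prop) (u v : V) : Prop :=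
  ∃ (p : ℕ) (c : Fin (p + 1) → V) (w : Fin p → ℕ), IsPath E u v p c w

/-- There is a path of even total weight from `u` to `v` in the edge-weighted
graph `E`. -/
def EvenReach {V : Type*} (E : V → V → ℕ → Prop) (u v : V) : Prop :=
  ∃ (p : ℕ) (c : Fin (p + 1) → V) (w : Fin p → ℕ), IsPath E u v p c w ∧ Even (∑ t, w t)

/-!
Without odd cycles, every resolution graph `G_i` carries a parity potential, a labelling
`f : V → ZMod 2` with `f l = f k + w` along each edge of weight `w`: shortcutting a walk to a
path only removes closed pieces made of one edge and a path back, i.e. cycles, so two walks with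
the same ends have the same parity. Flipping `f` on the components not containing `i` gives a
potential of `G_i'`, in which `j` is reached from `i` by an even path exactly when `f i = f j`.

Phasing every row of `A_i` by these labels, the haplotypes agree at the ends of a weight-`0`
edge of `G_i` and differ at the ends of a weight-`1` edge. If `01`, `10` and `11` all occurred
in columns `k`, `l` of `B`, then either all three lie in `ind^A(k,l)`, or one of them comes from
a row with `2`s at `k` and `l` whose phase contradicts an edge `kl` of some `G_i` created by
another of these gametes.
-/

section WeightedGraphs

variable {V : Type*}

inductive WeightedWalk (E : V → V → ℕ → Prop) : V → V → Type _
  | nil (u : V) : WeightedWalk E u u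
  | cons {u v x : V} {w : ℕ} (e : E u v w) (q : WeightedWalk E v x) : WeightedWalk E u x

namespace WeightedWalk

variable {E : V → V → ℕ → Prop}

def weight : ∀ {u v : V}, WeightedWalk E u v → ℕ
  | _, _, nil _ => 0
  | _, _, cons (w := w) _ q => w + q.weight

def support : ∀ {u v : V}, WeightedWalk E u v → List V
  | u, _, nil _ => [u]
  | u, _, cons _ q => u :: q.support

def append : ∀ {u v x : V}, WeightedWalk E u v → WeightedWalk E v x → WeightedWalk E u x
  | _, _, _, nil _, Q => Q
  | _, _, _, cons e q, Q => cons e (q.append Q)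

def reverse (hsymm : ∀ ⦃a b w⦄, E a b w → E b a w) :
    ∀ {u v : V}, WeightedWalk E u v → WeightedWalk E v u
  | _, _, nil u => nil u
  | _, _, cons e q => (q.reverse hsymm).append (cons (hsymm e) (nil _))

variable {u v x z : V}

@[simp] theorem weight_nil : (nil u : WeightedWalk E u u).weight = 0 := rfl

@[simp] theorem weight_cons {w : ℕ} (e : E u v w) (q : WeightedWalk E v x) :
    (cons e q).weight = w + q.weight := rfl

@[simp] theorem support_nil : (nil u : WeightedWalk E u u).support = [u] := rfl

@[simp] theorem support_cons {w : ℕ} (e : E u v w) (q : WeightedWalk E v x) :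
    (cons e q).support = u :: q.support := rfl

@[simp] theorem cons_append {w : ℕ} (e : E u v w) (q : WeightedWalk E v x)
    (Q : WeightedWalk E x z) : (cons e q).append Q = cons e (q.append Q) := rfl

@[simp] theorem weight_append (P : WeightedWalk E u v) (Q : WeightedWalk E v x) :
    (P.append Q).weight = P.weight + Q.weight := by
  induction P with
  | nil => simp [append]
  | cons e q ih => simp [ih, Nat.add_assoc]

theorem support_eq_cons (P : WeightedWalk E u v) : P.support = u :: P.support.tail := by
  cases P <;> rfl

theorem support_append (P : WeightedWalk E u v) (Q : WeightedWalk E v x) :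
    (P.append Q).support = P.support ++ Q.support.tail := by
  induction P with
  | nil => simpa [append] using Q.support_eq_cons
  | cons e q ih => simp [ih]

theorem end_mem_support (P : WeightedWalk E u v) : v ∈ P.support := by
  induction P with
  | nil => simp
  | cons e q ih => simp [ih]

@[simp] theorem weight_reverse (hsymm : ∀ ⦃a b w⦄, E a b w → E b a w)
    (P : WeightedWalk E u v) : (P.reverse hsymm).weight = P.weight := by
  induction P with
  | nil => rfl
  | cons e q ih => simp [reverse, ih, Nat.add_comm]

theorem weight_eq_zero_of_nodup (P : WeightedWalk E u u) (hP : P.support.Nodup) :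
    P.weight = 0 := by
  cases P with
  | nil => rfl
  | cons e q => exact absurd q.end_mem_support (List.nodup_cons.1 hP).1

theorem exists_append_eq (P : WeightedWalk E u v) (hz : z ∈ P.support) :
    ∃ (T : WeightedWalk E u z) (D : WeightedWalk E z v), T.append D = P := by
  induction P with
  | nil => obtain rfl := List.mem_singleton.1 hz; exact ⟨nil _, nil _, rfl⟩
  | @cons u _ _ _ e q ih =>
    obtain rfl | hzu := eq_or_ne z u
    · exact ⟨nil _, cons e q, rfl⟩
    · obtain ⟨T, D, rfl⟩ := ih ((List.mem_cons.1 hz).resolve_left hzu)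
      exact ⟨cons e T, D, rfl⟩

theorem nodup_of_nodup_append (T : WeightedWalk E u z) (D : WeightedWalk E z v)
    (h : (T.append D).support.Nodup) : T.support.Nodup ∧ D.support.Nodup := by
  rw [support_append, List.nodup_append] at h
  refine ⟨h.1, ?_⟩
  rw [D.support_eq_cons, List.nodup_cons]
  exact ⟨fun hz => h.2.2 _ T.end_mem_support _ hz rfl, h.2.1⟩

theorem exists_fin (P : WeightedWalk E u v) :
    ∃ (p : ℕ) (c : Fin (p + 1) → V) (w : Fin p → ℕ), List.ofFn c = P.support ∧ c 0 = u ∧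
      c (Fin.last p) = v ∧ (∀ t, E (c t.castSucc) (c t.succ) (w t)) ∧ ∑ t, w t = P.weight := by
  induction P with
  | nil u => exact ⟨0, fun _ => u, Fin.elim0, by simp, rfl, rfl, fun t => t.elim0, by simp⟩
  | @cons u _ _ w e q ih =>
    obtain ⟨p, c, ws, hsupp, rfl, rfl, hc, hsum⟩ := ih
    refine ⟨p + 1, Fin.cons u c, Fin.cons w ws, by simp [List.ofFn_succ, ← hsupp], rfl, rfl,
      Fin.cases (by simpa using e) (fun t => by simpa [← Fin.succ_castSucc] using hc t), ?_⟩
    simp [Fin.sum_univ_succ, hsum]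

theorem exists_isPath (P : WeightedWalk E u v) (hP : P.support.Nodup) :
    ∃ (p : ℕ) (c : Fin (p + 1) → V) (w : Fin p → ℕ), IsPath E u v p c w ∧ ∑ t, w t = P.weight := by
  obtain ⟨p, c, w, hsupp, h0, hl, hc, hsum⟩ := P.exists_fin
  exact ⟨p, c, w, ⟨List.nodup_ofFn.1 (hsupp ▸ hP), h0, hl, hc⟩, hsum⟩

theorem nonempty_of_fin : ∀ {p : ℕ} (c : Fin (p + 1) → V) (w : Fin p → ℕ),
    (∀ t, E (c t.castSucc) (c t.succ) (w t)) → Nonempty (WeightedWalk E (c 0) (c (Fin.last p)))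
  | 0, c, _, _ => ⟨nil (c 0)⟩
  | p + 1, c, w, hc => by
    obtain ⟨q⟩ := nonempty_of_fin (Fin.tail c) (Fin.tail w) fun t => by
      simpa only [Fin.tail, Fin.succ_castSucc] using hc t.succ
    exact ⟨cons (hc 0) q⟩

end WeightedWalk

theorem hasOddWeightCycle_of_isPath {E : V → V → ℕ → Prop} {a b : V} {w₀ p : ℕ}
    {c : Fin (p + 1) → V} {w : Fin p → ℕ} (e : E a b w₀) (hP : IsPath E b a p c w)
    (hodd : Odd (w₀ + ∑ t, w t)) : HasOddWeightCycle E := by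
  obtain ⟨hinj, h0, hl, hc⟩ := hP
  let w' : Fin (p + 1) → ℕ := Fin.snoc w w₀
  have hedge : ∀ t, E (c t) (c (t + 1)) (w' t) := Fin.lastCases
    (by simpa [w', Fin.last_add_one, h0, hl] using e)
    (fun t => by simpa [w', Fin.coeSucc_eq_succ] using hc t)
  refine ⟨p, c, w', hinj, hedge, fun s t hst => hinj ?_, ?_⟩
  · -- `Sym2.mk` is curried: the edges are compared as the functions `Sym2.mk (c t, c (t + 1))`,
    -- which still determine `c t`
    have := congrFun (congrArg Prod.fst hst) (c s, c (s + 1))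
    exact (show c s = c t ∧ c (s + 1) = c (t + 1) by simpa [Sym2.eq_iff] using this).1
  · simpa [w', Fin.sum_univ_castSucc, add_comm] using hodd

namespace WeightedWalk

variable {E : V → V → ℕ → Prop} {u v : V}

theorem exists_nodup (P : WeightedWalk E u v) : ∃ Q : WeightedWalk E u v, Q.support.Nodup ∧
    (HasOddWeightCycle E ∨ (Q.weight : ZMod 2) = P.weight) := by
  induction P with
  | nil u => exact ⟨nil u, List.nodup_singleton u, .inr rfl⟩
  | @cons u _ _ w e q ih =>
    obtain ⟨Q, hQ, hpar⟩ := ih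
    by_cases hu : u ∈ Q.support
    · -- cutting off the closed part `e` + `T` changes the parity only if that cycle is odd
      obtain ⟨T, D, rfl⟩ := Q.exists_append_eq hu
      obtain ⟨hT, hD⟩ := nodup_of_nodup_append T D hQ
      refine ⟨D, hD, ?_⟩
      by_cases hodd : Odd (w + T.weight)
      · obtain ⟨p, c, ws, hP, hsum⟩ := T.exists_isPath hT
        exact .inl (hasOddWeightCycle_of_isPath e hP (hsum ▸ hodd))
      · have hTw : ((w + T.weight : ℕ) : ZMod 2) = 0 :=
          ZMod.natCast_eq_zero_iff_even.2 (Nat.not_odd_iff_even.1 hodd)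
        refine hpar.imp_right fun h => ?_
        simp only [weight_append, weight_cons, Nat.cast_add] at h hTw ⊢
        grind
    · exact ⟨cons e Q, List.nodup_cons.2 ⟨hu, hQ⟩, hpar.imp_right fun h => by simp [h]⟩

theorem weight_eq_zero_of_closed (hE : ¬HasOddWeightCycle E) (C : WeightedWalk E u u) :
    (C.weight : ZMod 2) = 0 := by
  obtain ⟨Q, hQ, hpar⟩ := C.exists_nodup
  rw [← hpar.resolve_left hE, Q.weight_eq_zero_of_nodup hQ, Nat.cast_zero]

theorem weight_eq_of_not_hasOddWeightCycle (hsymm : ∀ ⦃a b w⦄, E a b w → E b a w)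
    (hE : ¬HasOddWeightCycle E) (P Q : WeightedWalk E u v) :
    (P.weight : ZMod 2) = Q.weight := by
  have := weight_eq_zero_of_closed hE (P.append (Q.reverse hsymm))
  simp only [weight_append, weight_reverse, Nat.cast_add] at this
  grind

end WeightedWalk

section Reachability

variable {E F : V → V → ℕ → Prop} {u v x : V}

theorem reachableW_iff_nonempty : ReachableW E u v ↔ Nonempty (WeightedWalk E u v) := by
  constructor
  · rintro ⟨p, c, w, -, rfl, rfl, hc⟩
    exact WeightedWalk.nonempty_of_fin c w hc
  · rintro ⟨P⟩
    obtain ⟨Q, hQ, -⟩ := P.exists_nodup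
    obtain ⟨p, c, w, hQ, -⟩ := Q.exists_isPath hQ
    exact ⟨p, c, w, hQ⟩

theorem ReachableW.refl (u : V) : ReachableW E u u :=
  reachableW_iff_nonempty.2 ⟨.nil u⟩

theorem ReachableW.trans (h₁ : ReachableW E u v) (h₂ : ReachableW E v x) : ReachableW E u x := by
  obtain ⟨P⟩ := reachableW_iff_nonempty.1 h₁
  obtain ⟨Q⟩ := reachableW_iff_nonempty.1 h₂
  exact reachableW_iff_nonempty.2 ⟨P.append Q⟩

theorem ReachableW.symm (hsymm : ∀ ⦃a b w⦄, E a b w → E b a w) (h : ReachableW E u v) :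
    ReachableW E v u := by
  obtain ⟨P⟩ := reachableW_iff_nonempty.1 h
  exact reachableW_iff_nonempty.2 ⟨P.reverse hsymm⟩

theorem ReachableW.of_edge {w : ℕ} (e : E u v w) : ReachableW E u v :=
  reachableW_iff_nonempty.2 ⟨.cons e (.nil v)⟩

theorem ReachableW.mono (hEF : ∀ ⦃a b w⦄, E a b w → F a b w) (h : ReachableW E u v) :
    ReachableW F u v := by
  obtain ⟨p, c, w, hinj, h0, hl, hc⟩ := h
  exact ⟨p, c, w, hinj, h0, hl, fun t => hEF (hc t)⟩

theorem ReachableW.equivalence (hsymm : ∀ ⦃a b w⦄, E a b w → E b a w) :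
    Equivalence (ReachableW E) :=
  ⟨.refl, .symm hsymm, .trans⟩

end Reachability

section Components

variable {E : V → V → ℕ → Prop} {vert : V → Prop} {f : V → ZMod 2} {i k l u v : V} {w : ℕ}

noncomputable def componentRep (E : V → V → ℕ → Prop) (k : V) : V :=
  (Quotient.mk (Relation.EqvGen.setoid (ReachableW E)) k).out

theorem reachableW_componentRep (hsymm : ∀ ⦃a b w⦄, E a b w → E b a w) (k : V) :
    ReachableW E (componentRep E k) k :=
  (ReachableW.equivalence hsymm).eqvGen_iff.1
    (Quotient.mk_out (s := Relation.EqvGen.setoid (ReachableW E)) k)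

theorem componentRep_eq_of_reachableW (h : ReachableW E k l) :
    componentRep E k = componentRep E l :=
  congrArg Quotient.out (Quotient.sound (Relation.EqvGen.rel _ _ h))

def IsParityPotential (E : V → V → ℕ → Prop) (f : V → ZMod 2) : Prop :=
  ∀ ⦃k l w⦄, E k l w → f l = f k + w

theorem exists_isParityPotential (hsymm : ∀ ⦃a b w⦄, E a b w → E b a w)
    (hE : ¬HasOddWeightCycle E) : ∃ f, IsParityPotential E f := by
  have hwalk (k : V) : Nonempty (WeightedWalk E (componentRep E k) k) :=
    reachableW_iff_nonempty.1 (reachableW_componentRep hsymm k)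
  refine ⟨fun k => ((hwalk k).some.weight : ZMod 2), fun k l w e => ?_⟩
  -- `k` and `l` have the same representative, so a walk to `l` from it can be compared with
  -- the chosen walk to `k` followed by `e`
  have hl : ∀ Q : WeightedWalk E (componentRep E l) l,
      (Q.weight : ZMod 2) = (hwalk k).some.weight + w := by
    rw [componentRep_eq_of_reachableW ((ReachableW.of_edge e).symm hsymm)]
    intro Q
    rw [WeightedWalk.weight_eq_of_not_hasOddWeightCycle hsymm hE Q
      ((hwalk k).some.append (.cons e (.nil l)))]
    simp
  exact hl _

namespace IsParityPotential

theorem apply_last (hf : IsParityPotential E f) : ∀ {p : ℕ} {c : Fin (p + 1) → V}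
    {w : Fin p → ℕ}, (∀ t, E (c t.castSucc) (c t.succ) (w t)) →
    f (c (Fin.last p)) = f (c 0) + ∑ t, (w t : ZMod 2)
  | 0, _, _, _ => by simp
  | p + 1, c, w, hc => by
    have ih := apply_last hf (c := c ∘ Fin.castSucc) (w := w ∘ Fin.castSucc)
      fun t => by simpa only [Function.comp_apply, Fin.succ_castSucc] using hc t.castSucc
    simp only [Function.comp_apply, Fin.castSucc_zero] at ih
    rw [Fin.sum_univ_castSucc, ← add_assoc, ← ih, ← Fin.succ_last]
    exact hf (hc (Fin.last p))

theorem evenReach_iff (hf : IsParityPotential E f) (h : ReachableW E u v) :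
    EvenReach E u v ↔ f u = f v := by
  have key {p c w} (hP : IsPath E u v p c w) : f u = f v ↔ Even (∑ t, w t) := by
    obtain ⟨-, rfl, rfl, hc⟩ := hP
    rw [hf.apply_last hc, ← ZMod.natCast_eq_zero_iff_even, Nat.cast_sum, left_eq_add]
  refine ⟨fun ⟨p, c, w, hP, heven⟩ => (key hP).2 heven, fun huv => ?_⟩
  obtain ⟨p, c, w, hP⟩ := h
  exact ⟨p, c, w, hP, (key hP).1 huv⟩

theorem evenReach_iff_evenReach_iff_even (hf : IsParityPotential E f) (hk : ReachableW E u k)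
    (hl : ReachableW E u l) (e : E k l w) :
    ((EvenReach E u k ↔ EvenReach E u l) ↔ Even w) := by
  rw [hf.evenReach_iff hk, hf.evenReach_iff hl, hf e, ← ZMod.natCast_eq_zero_iff_even]
  generalize f u = a, f k = b, (w : ZMod 2) = x
  decide +revert

end IsParityPotential

def IsComponentRoot (E : V → V → ℕ → Prop) (vert : V → Prop) (i c : V) : Prop :=
  vert c ∧ ¬ReachableW E i c ∧ componentRep E c = c

def joinComponents (E : V → V → ℕ → Prop) (vert : V → Prop) (i : V) (k l : V) (w : ℕ) : Prop :=
  E k l w ∨ (w = 0 ∧ ((k = i ∧ IsComponentRoot E vert i l) ∨ (l = i ∧ IsComponentRoot E vert i k)))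

theorem IsComponentRoot.eq_of_reachableW (hk : IsComponentRoot E vert i k)
    (hl : IsComponentRoot E vert i l) (h : ReachableW E k l) : k = l := by
  rw [← hk.2.2, ← hl.2.2, componentRep_eq_of_reachableW h]

theorem isComponentRoot_of_joinComponents (h : joinComponents E vert i i k 0) (hE : ¬E i k 0) :
    IsComponentRoot E vert i k := by
  rcases h with e | ⟨-, ⟨-, hk⟩ | ⟨rfl, hi⟩⟩
  exacts [absurd e hE, hk, absurd (.refl _) hi.2.1]

theorem joinComponents_symm (hsymm : ∀ ⦃a b w⦄, E a b w → E b a w) :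
    ∀ ⦃a b w⦄, joinComponents E vert i a b w → joinComponents E vert i b a w := by
  rintro a b w (e | ⟨hw, h⟩)
  exacts [.inl (hsymm e), .inr ⟨hw, h.symm⟩]

theorem reachableW_joinComponents (hsymm : ∀ ⦃a b w⦄, E a b w → E b a w)
    (hvert : ∀ ⦃a b w⦄, E a b w → vert a) (hk : vert k) :
    ReachableW (joinComponents E vert i) i k := by
  by_cases hik : ReachableW E i k
  · exact hik.mono fun _ _ _ => .inl
  have hvert' {a b : V} (h : ReachableW E a b) (hb : vert b) : vert a := by
    obtain ⟨P⟩ := reachableW_iff_nonempty.1 h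
    cases P with
    | nil => exact hb
    | cons e _ => exact hvert e
  set c := componentRep E k
  have hck : ReachableW E c k := reachableW_componentRep hsymm k
  have hroot : IsComponentRoot E vert i c :=
    ⟨hvert' hck hk, fun h => hik (h.trans hck), componentRep_eq_of_reachableW hck⟩
  exact (ReachableW.of_edge (.inr ⟨rfl, .inl ⟨rfl, hroot⟩⟩)).trans (hck.mono fun _ _ _ => .inl)

theorem IsParityPotential.exists_joinComponents (hsymm : ∀ ⦃a b w⦄, E a b w → E b a w)
    (hf : IsParityPotential E f) : ∃ g, IsParityPotential (joinComponents E vert i) g := by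
  classical
  -- flip `f` on every component not containing `i`, so that its root gets the value `f i`
  refine ⟨fun k => if ReachableW E i k then f k else f k + f (componentRep E k) + f i, ?_⟩
  rintro k l w (e | ⟨rfl, ⟨rfl, hl⟩ | ⟨rfl, hk⟩⟩)
  · have hkl : ReachableW E i k ↔ ReachableW E i l :=
      ⟨fun h => h.trans (.of_edge e), fun h => h.trans (.of_edge (hsymm e))⟩
    simp only [hkl, componentRep_eq_of_reachableW (.of_edge e), hf e]
    split_ifs <;> ring
  · simp only [ReachableW.refl, if_true, hl.2.1, if_false, hl.2.2]
    grind
  · simp only [ReachableW.refl, if_true, hk.2.1, if_false, hk.2.2]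
    grind

end Components

end WeightedGraphs

section Genotypes

variable {n m : ℕ} {A : Fin n → Fin m → Fin 3} {χ : Fin m → Fin m → Prop} {b : Bool}
  {i j k l : Fin m} {r : Fin n}

theorem colGreater_iff : ColGreater A i j ↔
    (∀ r, (A r i = 0 → A r j = 0) ∧ (A r j = 1 → A r i = 1)) ∧ ∃ r, A r i ≠ A r j := by
  have hsub : indA A i j ⊆ {(false, false), (true, false), (true, true)} ↔
      (false, true) ∉ indA A i j := by
    refine ⟨fun h h01 => by simpa using h h01, fun h p hp => ?_⟩
    obtain ⟨_ | _, _ | _⟩ := p <;> simp_all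
  have hrow (a b : Fin 3) : ¬((a = 0 ∧ b = 1) ∨ (a = 0 ∧ b = 2) ∨ (a = 2 ∧ b = 1)) ↔
      (a = 0 → b = 0) ∧ (b = 1 → a = 1) := by decide +revert
  rw [ColGreater, hsub]
  refine and_congr_left fun _ => ?_
  simp only [indA, Set.mem_ofPred_eq, not_exists, boolToFin3, Bool.false_eq_true, if_false,
    if_true, hrow]

theorem ColGreater.irrefl : ¬ColGreater A i i := fun ⟨_, _, hr⟩ => hr rfl

theorem ColGreater.trans (h₁ : ColGreater A i j) (h₂ : ColGreater A j k) : ColGreater A i k := by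
  rw [colGreater_iff] at *
  obtain ⟨h₁, r, hr⟩ := h₁
  obtain ⟨h₂, -⟩ := h₂
  refine ⟨fun r => ⟨fun h => (h₂ r).1 ((h₁ r).1 h), fun h => (h₁ r).2 ((h₂ r).2 h)⟩, ?_⟩
  -- if columns `i` and `k` agreed, column `j` would be squeezed between them
  have squeeze : ∀ a b c : Fin 3, (a = 0 → b = 0) ∧ (b = 1 → a = 1) →
      (b = 0 → c = 0) ∧ (c = 1 → b = 1) → a = c → a = b := by decide
  by_contra! hik
  exact hr (squeeze _ _ _ (h₁ r) (h₂ r) (hik r))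

theorem exists_mem_rowSet (hj : A r j = 2) : ∃ i, r ∈ rowSet A i := by
  have : IsTrans (Fin m) (ColGreater A) := ⟨fun _ _ _ => ColGreater.trans⟩
  have : Std.Irrefl (ColGreater A) := ⟨fun _ => ColGreater.irrefl⟩
  obtain ⟨k, hk, hkmax⟩ := (Finite.wellFounded_of_trans_of_irrefl (ColGreater A)).has_min
    {k | A r k = 2} ⟨j, hj⟩
  obtain ⟨i, ⟨hi, himax⟩, hmin⟩ := wellFounded_lt.has_min
    {i | A r i = 2 ∧ ∀ l, l ≠ i → A r l = 2 → ¬ColGreater A l i} ⟨k, hk, fun l _ hl => hkmax l hl⟩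
  exact ⟨i, hi, himax, fun l hli hl => lt_of_le_of_ne (not_lt.1 (hmin l hl)) hli.symm⟩

theorem eq_of_mem_rowSet (h₁ : r ∈ rowSet A i) (h₂ : r ∈ rowSet A j) : i = j := by
  by_contra hne
  exact lt_asymm (h₁.2.2 j (Ne.symm hne) ⟨h₂.1, h₂.2.1⟩) (h₂.2.2 i hne ⟨h₁.1, h₁.2.1⟩)

theorem mem_indA_comm {x y : Bool} : (x, y) ∈ indA A k l ↔ (y, x) ∈ indA A l k :=
  exists_congr fun _ => by tauto

theorem resEdge_symm : ∀ ⦃k l w⦄, resEdge A i k l w → resEdge A i l k w := by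
  rintro k l w ⟨hkl, ⟨r, hr, hk, hl⟩, h⟩
  refine ⟨hkl.symm, ⟨r, hr, hl, hk⟩, ?_⟩
  rcases h with ⟨rfl, h | ⟨j, hj, r', hr', hk', hl'⟩⟩ | ⟨rfl, h⟩
  · exact .inl ⟨rfl, .inl (mem_indA_comm.1 h)⟩
  · exact .inl ⟨rfl, .inr ⟨j, hj, r', hr', hl', hk'⟩⟩
  · simp only [Set.insert_subset_iff, Set.singleton_subset_iff] at h
    exact .inr ⟨rfl, Set.insert_subset_iff.2 ⟨mem_indA_comm.1 h.2,
      Set.singleton_subset_iff.2 (mem_indA_comm.1 h.1)⟩⟩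

theorem resVert_of_resEdge : ∀ ⦃k l w⦄, resEdge A i k l w → resVert A i k :=
  fun _ _ _ ⟨_, ⟨r, hr, hk, _⟩, _⟩ => ⟨r, hr, hk⟩

open Classical in
noncomputable def haplotype (A : Fin n → Fin m → Fin 3) (χ : Fin m → Fin m → Prop) (b : Bool) :
    Fin n → Fin m → Bool :=
  fun r j => if A r j = 2 then b ^^ decide (∃ i, r ∈ rowSet A i ∧ χ i j) else decide (A r j = 1)

open Classical in
theorem haplotype_of_mem_rowSet (hr : r ∈ rowSet A i) (hj : A r j = 2) :
    haplotype A χ b r j = (b ^^ decide (χ i j)) := by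
  have : (∃ i', r ∈ rowSet A i' ∧ χ i' j) ↔ χ i j :=
    ⟨fun ⟨_, hr', h⟩ => eq_of_mem_rowSet hr' hr ▸ h, fun h => ⟨i, hr, h⟩⟩
  simp [haplotype, hj, this]

theorem boolToFin3_haplotype (hj : A r j ≠ 2) : boolToFin3 (haplotype A χ b r j) = A r j := by
  simp only [haplotype, hj, if_false]
  revert hj
  generalize A r j = a
  decide +revert

theorem explains_haplotype : Explains (haplotype A χ false) (haplotype A χ true) A := by
  intro r j
  by_cases hj : A r j = 2
  · simp [haplotype, hj]
  · have h₁ := boolToFin3_haplotype (χ := χ) (b := false) hj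
    have h₂ := boolToFin3_haplotype (χ := χ) (b := true) hj
    refine ⟨fun h => ?_, fun h => ?_, fun h => absurd h hj⟩ <;>
      simp only [h, boolToFin3] at h₁ h₂ <;> split_ifs at h₁ h₂ <;> simp_all

theorem mem_indA_or_of_mem_indB {x y : Bool}
    (h : (x, y) ∈ indB (haplotype A χ false) (haplotype A χ true) k l) :
    (x, y) ∈ indA A k l ∨
      ∃ r i, r ∈ rowSet A i ∧ A r k = 2 ∧ A r l = 2 ∧ (x = y ↔ (χ i k ↔ χ i l)) := by
  obtain ⟨r, hr⟩ := h
  obtain ⟨b, rfl, rfl⟩ : ∃ b, haplotype A χ b r k = x ∧ haplotype A χ b r l = y := by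
    rcases hr with h | h
    exacts [⟨false, h⟩, ⟨true, h⟩]
  by_cases hk : A r k = 2 <;> by_cases hl : A r l = 2
  · obtain ⟨i, hi⟩ := exists_mem_rowSet hk
    refine .inr ⟨r, i, hi, hk, hl, ?_⟩
    rw [haplotype_of_mem_rowSet hi hk, haplotype_of_mem_rowSet hi hl]
    simp
  · exact .inl ⟨r, .inr (.inr ⟨hk, (boolToFin3_haplotype hl).symm⟩)⟩
  · exact .inl ⟨r, .inr (.inl ⟨(boolToFin3_haplotype hk).symm, hl⟩)⟩
  · exact .inl ⟨r, .inl ⟨(boolToFin3_haplotype hk).symm, (boolToFin3_haplotype hl).symm⟩⟩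

theorem threeGamete_haplotype
    (hind : ∀ k l : Fin m,
      ¬ (({(false, true), (true, false), (true, true)} : Set (Bool × Bool)) ⊆ indA A k l))
    (hχ : ∀ i k l w, resEdge A i k l w → ((χ i k ↔ χ i l) ↔ Even w)) :
    ThreeGamete (haplotype A χ false) (haplotype A χ true) := by
  intro k l hsub
  simp only [Set.insert_subset_iff, Set.singleton_subset_iff] at hsub
  obtain ⟨h01, h10, h11⟩ := hsub
  have hkl : k ≠ l := by
    rintro rfl
    obtain ⟨r, h | h⟩ := h01 <;> exact Bool.false_ne_true (h.1.symm.trans h.2)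
  have edge0 {r i} (hr : r ∈ rowSet A i) (hk : A r k = 2) (hl : A r l = 2)
      (h : (true, true) ∈ indA A k l ∨ ∃ j, j ≠ i ∧ ∃ r₂ ∈ rowSet A j, A r₂ k = 2 ∧ A r₂ l = 2) :
      (χ i k ↔ χ i l) :=
    (hχ i k l 0 ⟨hkl, ⟨r, hr, hk, hl⟩, .inl ⟨rfl, h⟩⟩).2 Even.zero
  -- the `11` gamete forces `k` and `l` to get equal labels in every class with two `2`s there
  have hsame : ∀ r i, r ∈ rowSet A i → A r k = 2 → A r l = 2 → (χ i k ↔ χ i l) := by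
    rcases mem_indA_or_of_mem_indB h11 with h11 | ⟨r, i, hr, hk, hl, h⟩
    · exact fun r i hr hk hl => edge0 hr hk hl (.inl h11)
    · intro r' i' hr' hk' hl'
      obtain rfl | hi := eq_or_ne i' i
      · exact h.1 rfl
      · exact edge0 hr' hk' hl' (.inr ⟨i, hi.symm, r, hr, hk, hl⟩)
  have hA {x y : Bool} (hxy : x ≠ y)
      (h : (x, y) ∈ indB (haplotype A χ false) (haplotype A χ true) k l) : (x, y) ∈ indA A k l :=
    (mem_indA_or_of_mem_indB h).resolve_right
      fun ⟨r, i, hr, hk, hl, h⟩ => hxy (h.2 (hsame r i hr hk hl))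
  have h01 := hA (by decide) h01
  have h10 := hA (by decide) h10
  rcases mem_indA_or_of_mem_indB h11 with h11 | ⟨r, i, hr, hk, hl, h⟩
  · exact hind k l (by simp [Set.insert_subset_iff, h01, h10, h11])
  · have e : resEdge A i k l 1 :=
      ⟨hkl, ⟨r, hr, hk, hl⟩, .inr ⟨rfl, by simp [Set.insert_subset_iff, h01, h10]⟩⟩
    exact Nat.not_even_one ((hχ i k l 1 e).1 (h.1 rfl))

end Genotypes

/-- Let `A` be an `n × m` genotype matrix such that `{01,10,11} ⊄ ind^A(i,j)` for all
columns `i, j` and no resolution graph `G_i` contains a cycle of odd total weight.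
Then there is a `2n × m` haplotype matrix `B` explaining `A` that satisfies the three
gamete property; moreover, `B` can be chosen so that, for each `i`, there is a
connected supergraph `G_i'` of `G_i` (obtained by joining one vertex of each
connected component of `G_i` not containing `i` to `i` by an edge of weight `0`)
such that for each row `g ∈ A_i` and each column `j` with `g[j] = 2`, the first
explaining haplotype `h` of `g` has `h[j] = 0` if `j` is connected to `i` by an
even-weight path in `G_i'`, and `h[j] = 1` otherwise. -/
theorem dpph_construction {n m : ℕ} (A : Fin n → Fin m → Fin 3)
    (hind : ∀ i j : Fin m,
      ¬ (({(false, true), (true, false), (true, true)} : Set (Bool × Bool)) ⊆ indA A i j))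
    (hcyc : ∀ i : Fin m, ¬ HasOddWeightCycle (resEdge A i)) :
    ∃ (B₁ B₂ : Fin n → Fin m → Bool) (E' : Fin m → (Fin m → Fin m → ℕ → Prop)),
      Explains B₁ B₂ A ∧ ThreeGamete B₁ B₂ ∧
      -- each G_i' is a supergraph of G_i
      (∀ i k l w, resEdge A i k l w → E' i k l w) ∧
      -- each G_i' is symmetric
      (∀ i k l w, E' i k l w → E' i l k w) ∧
      -- the added edges have weight 0 and join i to a vertex of a
      -- connected component of G_i not containing i
      (∀ i k l w, E' i k l w → resEdge A i k l w ∨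
        (w = 0 ∧ ((k = i ∧ resVert A i l ∧ ¬ ReachableW (resEdge A i) i l) ∨
                  (l = i ∧ resVert A i k ∧ ¬ ReachableW (resEdge A i) i k)))) ∧
      -- only one vertex per connected component of G_i is joined to i
      (∀ i k l, k ≠ l →
        (E' i i k 0 ∧ ¬ resEdge A i i k 0) → (E' i i l 0 ∧ ¬ resEdge A i i l 0) →
        ¬ ReachableW (resEdge A i) k l) ∧
      -- each G_i' is connected (every vertex of G_i is joined to i)
      (∀ i k, resVert A i k → ReachableW (E' i) i k) ∧
      -- the haplotypes are determined by parities of path weights in G_i'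
      (∀ i : Fin m, ∀ r ∈ rowSet A i, ∀ j : Fin m, A r j = 2 →
        (B₁ r j = false ↔ EvenReach (E' i) i j)) := by
  set E' : Fin m → Fin m → Fin m → ℕ → Prop :=
    fun i => joinComponents (resEdge A i) (resVert A i) i
  have hconn (i k : Fin m) (hk : resVert A i k) : ReachableW (E' i) i k :=
    reachableW_joinComponents resEdge_symm resVert_of_resEdge hk
  set χ : Fin m → Fin m → Prop := fun i j => ¬EvenReach (E' i) i j
  have hχ (i k l : Fin m) (w : ℕ) (e : resEdge A i k l w) : (χ i k ↔ χ i l) ↔ Even w := by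
    obtain ⟨f, hf⟩ := exists_isParityPotential resEdge_symm (hcyc i)
    obtain ⟨g, hg⟩ := hf.exists_joinComponents (vert := resVert A i) (i := i) resEdge_symm
    rw [not_iff_not]
    exact hg.evenReach_iff_evenReach_iff_even (hconn i k (resVert_of_resEdge e))
      (hconn i l (resVert_of_resEdge (resEdge_symm e))) (.inl e)
  refine ⟨haplotype A χ false, haplotype A χ true, E', explains_haplotype,
    threeGamete_haplotype hind hχ, fun i k l w => .inl, fun i => joinComponents_symm resEdge_symm,
    ?_, ?_, hconn, fun i r hr j hj => by simp [haplotype_of_mem_rowSet hr hj, χ]⟩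
  · rintro i k l w (e | ⟨rfl, ⟨rfl, hl, hil, -⟩ | ⟨rfl, hk, hik, -⟩⟩)
    exacts [.inl e, .inr ⟨rfl, .inl ⟨rfl, hl, hil⟩⟩, .inr ⟨rfl, .inr ⟨rfl, hk, hik⟩⟩]
  · exact fun i k l hkl hk hl => hkl ∘
      (isComponentRoot_of_joinComponents hk.1 hk.2).eq_of_reachableW
        (isComponentRoot_of_joinComponents hl.1 hl.2)
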